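/- arXiv:2407.08295 — 8 statements merged into one kernel-verified Lean document; each statement's English description precedes it below -/
import Mathlib

section
/- Let r > 0, let P ⊂ ℝ^d be a finite set, let F ⊂ ℝ^d be a finite set of centers, and let c ∈ F be such that F ∖ {c} is nonempty. Suppose cost_r(P, F) < r and dist(p, c) > 2r for every p ∈ P. Then cost_r(P, F ∖ {c}) = cost_r(P, F). (Minimality argument in the proof of Lemma 2.2: a center with no point of P within distance 2r can be deleted without changing the cost, so a minimal optimal solution has every center within 2r of some point.) -/
theorem Finset.inf'_erase_of_inf'_lt {α β : Type*} [DecidableEq α] [LinearOrder β] {s : Finset α}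
    {c : α} (hc : c ∈ s) (hs : (s.erase c).Nonempty) (f : α → β)
    (hlt : s.inf' ⟨c, hc⟩ f < f c) :
    (s.erase c).inf' hs f = s.inf' ⟨c, hc⟩ f := by
  obtain ⟨m, hm, hfm⟩ := s.exists_mem_eq_inf' ⟨c, hc⟩ f
  have hmc : m ≠ c := by rintro rfl; exact hlt.ne hfm
  refine le_antisymm ?_ (Finset.inf'_mono f (s.erase_subset c) hs)
  exact hfm ▸ Finset.inf'_le f (Finset.mem_erase.mpr ⟨hmc, hm⟩)

theorem lt_max_dist_sub_of_two_mul_lt {α : Type*} [PseudoMetricSpace α] {r : ℝ} {p c : α}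
    (hfar : 2 * r < dist p c) : r < max (dist p c - r) 0 :=
  lt_max_of_lt_left (by linarith)

open Classical in
theorem remove_useless_center_general {d : ℕ} (r : ℝ)
    (P F : Finset (EuclideanSpace ℝ (Fin d)))
    (c : EuclideanSpace ℝ (Fin d)) (hc : c ∈ F)
    (hF' : (F.erase c).Nonempty)
    (hcost : ∑ p ∈ P, F.inf' ⟨c, hc⟩ (fun c' => max (dist p c' - r) 0) < r)
    (hfar : ∀ p ∈ P, dist p c > 2 * r) :
    ∑ p ∈ P, (F.erase c).inf' hF' (fun c' => max (dist p c' - r) 0) =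
      ∑ p ∈ P, F.inf' ⟨c, hc⟩ (fun c' => max (dist p c' - r) 0) := by
  have hnonneg : ∀ p ∈ P, 0 ≤ F.inf' ⟨c, hc⟩ (fun c' => max (dist p c' - r) 0) :=
    fun p _ => Finset.le_inf' _ _ fun _ _ => le_max_right _ _
  refine Finset.sum_congr rfl fun p hp => Finset.inf'_erase_of_inf'_lt hc hF' _ ?_
  calc F.inf' ⟨c, hc⟩ (fun c' => max (dist p c' - r) 0)
      ≤ ∑ q ∈ P, F.inf' ⟨c, hc⟩ (fun c' => max (dist q c' - r) 0) :=
        Finset.single_le_sum hnonneg hp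
    _ < r := hcost
    _ < max (dist p c - r) 0 := lt_max_dist_sub_of_two_mul_lt (hfar p hp)

open Classical in
/-- Minimality argument in the proof of Lemma 2.2: if `cost_r(P, F) < r` and
some center `c ∈ F` has no point of `P` within distance `2r`, then deleting
`c` does not change the cost. -/
theorem remove_useless_center {d : ℕ} (r : ℝ) (hr : 0 < r)
    (P F : Finset (EuclideanSpace ℝ (Fin d)))
    (c : EuclideanSpace ℝ (Fin d)) (hc : c ∈ F)
    (hF' : (F.erase c).Nonempty)
    (hcost : ∑ p ∈ P, F.inf' ⟨c, hc⟩ (fun c' => max (dist p c' - r) 0) < r)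
    (hfar : ∀ p ∈ P, dist p c > 2 * r) :
    ∑ p ∈ P, (F.erase c).inf' hF' (fun c' => max (dist p c' - r) 0) =
      ∑ p ∈ P, F.inf' ⟨c, hc⟩ (fun c' => max (dist p c' - r) 0) :=
  remove_useless_center_general r P F c hc hF' hcost hfar
end

section
/- Let r ≥ 0 and ε ≥ 0, let P ⊂ ℝ^d be finite, let F ⊂ ℝ^d be finite and nonempty, let c ∈ F, and let c̃ ∈ ℝ^d satisfy dist(c, c̃) ≤ ε·r. Then cost_{(1+ε)r}(P, (F ∖ {c}) ∪ {c̃}) ≤ cost_r(P, F). (Single-center swap inequality underlying Claim 2.5: replacing one center by a point within distance εr of it, while enlarging the radius to (1+ε)r, does not increase the clustering cost.) -/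
/-! The inequality holds point by point. A center `x ≠ c` survives the swap, and enlarging the
radius only lowers its cost; the center `c` is replaced by `ct`, which by the triangle inequality
is at most `ε r` farther from every point, exactly what the larger radius `(1 + ε) r` absorbs. -/

theorem Finset.inf'_insert_erase_le_inf' {α β : Type*} [DecidableEq α] [SemilatticeInf β]
    {s : Finset α} (hs : s.Nonempty) {a b : α} {f g : α → β}
    (hab : g b ≤ f a) (hfg : ∀ x ∈ s, x ≠ a → g x ≤ f x) :
    (insert b (s.erase a)).inf' (insert_nonempty _ _) g ≤ s.inf' hs f := by
  refine le_inf' hs _ fun x hx => ?_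
  by_cases hxa : x = a
  · subst hxa
    exact inf'_le_of_le _ (mem_insert_self _ _) hab
  · exact inf'_le_of_le _ (mem_insert_of_mem (mem_erase.2 ⟨hxa, hx⟩)) (hfg x hx hxa)

theorem max_dist_sub_le_max_dist_sub {α : Type*} [PseudoMetricSpace α] {p x y : α} {r R : ℝ}
    (h : dist x y + r ≤ R) : max (dist p y - R) 0 ≤ max (dist p x - r) 0 := by
  have := dist_triangle p x y
  exact max_le_max (by linarith) le_rfl

open Classical in
theorem single_center_swap_general {d : ℕ} (r ε : ℝ)
    (P F : Finset (EuclideanSpace ℝ (Fin d))) (hF : F.Nonempty)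
    (c : EuclideanSpace ℝ (Fin d))
    (ct : EuclideanSpace ℝ (Fin d)) (h : dist c ct ≤ ε * r) :
    ∑ p ∈ P, (insert ct (F.erase c)).inf' (Finset.insert_nonempty _ _)
        (fun x => max (dist p x - (1 + ε) * r) 0) ≤
      ∑ p ∈ P, F.inf' hF (fun x => max (dist p x - r) 0) := by
  have hεr : 0 ≤ ε * r := dist_nonneg.trans h
  refine Finset.sum_le_sum fun p _ => Finset.inf'_insert_erase_le_inf' hF ?_ ?_
  · exact max_dist_sub_le_max_dist_sub (by linarith)
  · intro x _ _
    exact max_dist_sub_le_max_dist_sub (by rw [dist_self]; linarith)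

open Classical in
/-- Single-center swap inequality underlying Claim 2.5: replacing one center
`c ∈ F` by a point `ct` within distance `ε·r` of it, while enlarging the
radius to `(1+ε)·r`, does not increase the clustering cost. -/
theorem single_center_swap {d : ℕ} (r ε : ℝ) (hr : 0 ≤ r) (hε : 0 ≤ ε)
    (P F : Finset (EuclideanSpace ℝ (Fin d))) (hF : F.Nonempty)
    (c : EuclideanSpace ℝ (Fin d)) (hc : c ∈ F)
    (ct : EuclideanSpace ℝ (Fin d)) (h : dist c ct ≤ ε * r) :
    ∑ p ∈ P, (insert ct (F.erase c)).inf' (Finset.insert_nonempty _ _)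
        (fun x => max (dist p x - (1 + ε) * r) 0) ≤
      ∑ p ∈ P, F.inf' hF (fun x => max (dist p x - r) 0) :=
  single_center_swap_general r ε P F hF c ct h
end

section
/- Let r ≥ 0 and ε ≥ 0, let P ⊂ ℝ^d be finite, and let F*, F ⊂ ℝ^d be finite nonempty sets of centers such that for every c* ∈ F* there exists c ∈ F with dist(c*, c) ≤ ε·r. Then cost_{(1+ε)r}(P, F) ≤ cost_r(P, F*). (Grid-replacement argument concluding Lemma 2.2: if every optimal center has a candidate center within distance εr, the candidate set with radius (1+ε)r costs no more than the optimum with radius r.) -/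
/-! If `c` is within `δ` of `c'`, then by the triangle inequality enlarging the radius by `δ`
absorbs the move from `c'` to `c`, pointwise in `p`; minimising over centres and summing over
`P` gives the theorem with `δ = ε r`. -/

section PseudoMetricSpace

variable {X : Type*} [PseudoMetricSpace X]

theorem max_dist_sub_le_of_dist_le {p c c' : X} {r δ : ℝ} (hc : dist c' c ≤ δ) :
    max (dist p c - (r + δ)) 0 ≤ max (dist p c' - r) 0 := by
  have := dist_triangle p c' c
  exact max_le_max (by linarith) le_rfl

theorem Finset.inf'_max_dist_sub_le_of_forall_exists_dist_le {F F' : Finset X}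
    (hF : F.Nonempty) (hF' : F'.Nonempty) {r δ : ℝ}
    (h : ∀ c' ∈ F', ∃ c ∈ F, dist c' c ≤ δ) (p : X) :
    F.inf' hF (fun c => max (dist p c - (r + δ)) 0) ≤
      F'.inf' hF' (fun c' => max (dist p c' - r) 0) := by
  refine Finset.le_inf' _ _ fun c' hc' => ?_
  obtain ⟨c, hc, hdist⟩ := h c' hc'
  exact (Finset.inf'_le _ hc).trans (max_dist_sub_le_of_dist_le hdist)

end PseudoMetricSpace

theorem grid_replacement_general {d : ℕ} (r ε : ℝ)
    (P Fstar F : Finset (EuclideanSpace ℝ (Fin d)))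
    (hFs : Fstar.Nonempty) (hF : F.Nonempty)
    (h : ∀ cs ∈ Fstar, ∃ c ∈ F, dist cs c ≤ ε * r) :
    ∑ p ∈ P, F.inf' hF (fun x => max (dist p x - (1 + ε) * r) 0) ≤
      ∑ p ∈ P, Fstar.inf' hFs (fun x => max (dist p x - r) 0) := by
  have hradius : (1 + ε) * r = r + ε * r := by ring
  simp only [hradius]
  exact Finset.sum_le_sum fun p _ =>
    Finset.inf'_max_dist_sub_le_of_forall_exists_dist_le hF hFs h p

/-- Grid-replacement argument concluding Lemma 2.2: if every center of `F*`
has a candidate center of `F` within distance `ε·r`, then the candidate set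
`F` with radius `(1+ε)·r` costs no more than `F*` with radius `r`. -/
theorem grid_replacement {d : ℕ} (r ε : ℝ) (hr : 0 ≤ r) (hε : 0 ≤ ε)
    (P Fstar F : Finset (EuclideanSpace ℝ (Fin d)))
    (hFs : Fstar.Nonempty) (hF : F.Nonempty)
    (h : ∀ cs ∈ Fstar, ∃ c ∈ F, dist cs c ≤ ε * r) :
    ∑ p ∈ P, F.inf' hF (fun x => max (dist p x - (1 + ε) * r) 0) ≤
      ∑ p ∈ P, Fstar.inf' hFs (fun x => max (dist p x - r) 0) :=
  grid_replacement_general r ε P Fstar F hFs hF h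
end

section
/- Let 0 < ε < 1, r ≥ 0, k ≥ 1, and let P ⊂ ℝ^d be a finite set of n points. Let F*_r ⊂ ℝ^d be an optimal solution for radius r, i.e., F*_r is finite nonempty with |F*_r| ≤ k and cost_r(P, F*_r) ≤ cost_r(P, F') for every finite nonempty F' ⊂ ℝ^d with |F'| ≤ k; let F*_0 be defined analogously with r replaced by 0. If cost_r(P, F*_r) ≥ 2nr/ε, then cost_0(P, F*_0) ≤ (1 + ε/2)·cost_r(P, F*_r) and cost_r(P, F*_r) ≤ cost_0(P, F*_0). (First part of Lemma 2.3: when r is tiny compared to the optimum, the optimal k-median cost is within a 1+ε/2 factor of the optimal hybrid cost.) -/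
/-! Each point pays at most `r` more to its nearest center under `dist` than under the truncated
distance `max (dist p c - r) 0`, and never less. Comparing each optimum with the other
optimum's centers therefore gives `OPT_r ≤ OPT_0 ≤ OPT_r + n r`, and the hypothesis on
`OPT_r` says exactly that `n r ≤ (ε / 2) OPT_r`. -/

section TruncatedDistance

variable {α : Type*} [PseudoMetricSpace α]

theorem sum_inf'_truncDist_le_sum_inf'_dist {r : ℝ} (hr : 0 ≤ r) (P F : Finset α)
    (hF : F.Nonempty) :
    ∑ p ∈ P, F.inf' hF (fun c => max (dist p c - r) 0) ≤
      ∑ p ∈ P, F.inf' hF (fun c => dist p c) :=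
  Finset.sum_le_sum fun p _ =>
    Finset.inf'_mono_fun fun c _ => max_le (by linarith [dist_nonneg (x := p) (y := c)]) dist_nonneg

theorem sum_inf'_dist_le_sum_inf'_truncDist_add (r : ℝ) (P F : Finset α) (hF : F.Nonempty) :
    ∑ p ∈ P, F.inf' hF (fun c => dist p c) ≤
      ∑ p ∈ P, F.inf' hF (fun c => max (dist p c - r) 0) + P.card * r := by
  have pointwise (p : α) :
      F.inf' hF (fun c => dist p c) ≤ F.inf' hF (fun c => max (dist p c - r) 0) + r := by
    rw [← sub_le_iff_le_add]
    refine Finset.le_inf' hF _ fun c hc => ?_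
    have := Finset.inf'_le (fun c => dist p c) hc
    linarith [le_max_left (dist p c - r) 0]
  calc ∑ p ∈ P, F.inf' hF (fun c => dist p c)
      ≤ ∑ p ∈ P, (F.inf' hF (fun c => max (dist p c - r) 0) + r) :=
        Finset.sum_le_sum fun p _ => pointwise p
    _ = _ := by rw [Finset.sum_add_distrib, Finset.sum_const, nsmul_eq_mul]

end TruncatedDistance

theorem hybrid_vs_median_opt_general {d : ℕ} (ε r : ℝ) (hε0 : 0 < ε)
    (hr : 0 ≤ r) (k : ℕ)
    (P Fr F0 : Finset (EuclideanSpace ℝ (Fin d)))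
    (hFr : Fr.Nonempty) (hF0 : F0.Nonempty)
    (hFrk : Fr.card ≤ k) (hF0k : F0.card ≤ k)
    (hFropt : ∀ F' : Finset (EuclideanSpace ℝ (Fin d)), (h' : F'.Nonempty) →
      F'.card ≤ k →
      ∑ p ∈ P, Fr.inf' hFr (fun c => max (dist p c - r) 0) ≤
        ∑ p ∈ P, F'.inf' h' (fun c => max (dist p c - r) 0))
    (hF0opt : ∀ F' : Finset (EuclideanSpace ℝ (Fin d)), (h' : F'.Nonempty) →
      F'.card ≤ k →
      ∑ p ∈ P, F0.inf' hF0 (fun c => dist p c) ≤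
        ∑ p ∈ P, F'.inf' h' (fun c => dist p c))
    (hbig : 2 * P.card * r / ε ≤
      ∑ p ∈ P, Fr.inf' hFr (fun c => max (dist p c - r) 0)) :
    (∑ p ∈ P, F0.inf' hF0 (fun c => dist p c) ≤
      (1 + ε / 2) * ∑ p ∈ P, Fr.inf' hFr (fun c => max (dist p c - r) 0)) ∧
    (∑ p ∈ P, Fr.inf' hFr (fun c => max (dist p c - r) 0) ≤
      ∑ p ∈ P, F0.inf' hF0 (fun c => dist p c)) := by
  have hOPT0_le : ∑ p ∈ P, F0.inf' hF0 (fun c => dist p c) ≤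
      ∑ p ∈ P, Fr.inf' hFr (fun c => max (dist p c - r) 0) + P.card * r :=
    (hF0opt Fr hFr hFrk).trans (sum_inf'_dist_le_sum_inf'_truncDist_add r P Fr hFr)
  have hnr : 2 * P.card * r ≤
      (∑ p ∈ P, Fr.inf' hFr (fun c => max (dist p c - r) 0)) * ε :=
    (div_le_iff₀ hε0).mp hbig
  exact ⟨by linarith,
    (hFropt F0 hF0 hF0k).trans (sum_inf'_truncDist_le_sum_inf'_dist hr P F0 hF0)⟩

/-- First part of Lemma 2.3: if `OPT_r ≥ 2nr/ε`, then the optimal k-median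
cost `OPT_0` satisfies `OPT_0 ≤ (1 + ε/2)·OPT_r` and `OPT_r ≤ OPT_0`. -/
theorem hybrid_vs_median_opt {d : ℕ} (ε r : ℝ) (hε0 : 0 < ε) (hε1 : ε < 1)
    (hr : 0 ≤ r) (k : ℕ) (hk : 1 ≤ k)
    (P Fr F0 : Finset (EuclideanSpace ℝ (Fin d)))
    (hFr : Fr.Nonempty) (hF0 : F0.Nonempty)
    (hFrk : Fr.card ≤ k) (hF0k : F0.card ≤ k)
    (hFropt : ∀ F' : Finset (EuclideanSpace ℝ (Fin d)), (h' : F'.Nonempty) →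
      F'.card ≤ k →
      ∑ p ∈ P, Fr.inf' hFr (fun c => max (dist p c - r) 0) ≤
        ∑ p ∈ P, F'.inf' h' (fun c => max (dist p c - r) 0))
    (hF0opt : ∀ F' : Finset (EuclideanSpace ℝ (Fin d)), (h' : F'.Nonempty) →
      F'.card ≤ k →
      ∑ p ∈ P, F0.inf' hF0 (fun c => dist p c) ≤
        ∑ p ∈ P, F'.inf' h' (fun c => dist p c))
    (hbig : 2 * P.card * r / ε ≤
      ∑ p ∈ P, Fr.inf' hFr (fun c => max (dist p c - r) 0)) :
    (∑ p ∈ P, F0.inf' hF0 (fun c => dist p c) ≤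
      (1 + ε / 2) * ∑ p ∈ P, Fr.inf' hFr (fun c => max (dist p c - r) 0)) ∧
    (∑ p ∈ P, Fr.inf' hFr (fun c => max (dist p c - r) 0) ≤
      ∑ p ∈ P, F0.inf' hF0 (fun c => dist p c)) :=
  hybrid_vs_median_opt_general ε r hε0 hr k P Fr F0 hFr hF0 hFrk hF0k hFropt hF0opt hbig
end

section
/- Let 0 < ε < 1, r ≥ 0, k ≥ 1, and let P ⊂ ℝ^d be a finite set of n points. Let F*_r and F*_0 be optimal solutions of size at most k for radius r and radius 0 respectively (as in Lemma 2.3), and suppose cost_r(P, F*_r) ≥ 2nr/ε. If F ⊂ ℝ^d is finite nonempty with |F| ≤ k and cost_0(P, F) ≤ (1 + ε/3)·cost_0(P, F*_0), then cost_r(P, F) ≤ (1 + ε)·cost_r(P, F*_r). (Second part of Lemma 2.3: a (1+ε/3)-approximate k-median solution is a (1+ε)-approximate hybrid solution when r ≤ ε·OPT_r/(2n).) -/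
/-!
Since `t ↦ max (t - r) 0` is monotone, `d_r(p, F) = max (d_0(p, F) - r) 0`, so
`d_0 - r ≤ d_r ≤ d_0` pointwise. Hence, with `n = |P|` and `OPT_r = cost_r(P, F*_r)`,
`cost_r(P, F) ≤ cost_0(P, F) ≤ (1 + ε/3) cost_0(P, F*_0) ≤ (1 + ε/3) cost_0(P, F*_r)
≤ (1 + ε/3) (OPT_r + n r)`, and `n r ≤ ε OPT_r / 2` turns the last bound into
`(1 + ε/3) (1 + ε/2) OPT_r ≤ (1 + ε) OPT_r`.
-/

open Finset

section TruncatedDistance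

variable {α : Type*} [PseudoMetricSpace α]

theorem inf'_max_dist_sub_zero (F : Finset α) (hF : F.Nonempty) (p : α) (r : ℝ) :
    F.inf' hF (fun c => max (dist p c - r) 0) = max (F.inf' hF (fun c => dist p c) - r) 0 := by
  have hmono : Monotone fun t : ℝ => max (t - r) 0 := fun _ _ h =>
    max_le_max (sub_le_sub_right h r) le_rfl
  exact (apply_inf'_eq_inf'_comp hF (fun t => max (t - r) 0) fun _ _ => hmono.map_min).symm

theorem sum_inf'_max_dist_sub_zero_le_sum_inf'_dist (P F : Finset α) (hF : F.Nonempty)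
    {r : ℝ} (hr : 0 ≤ r) :
    ∑ p ∈ P, F.inf' hF (fun c => max (dist p c - r) 0) ≤ ∑ p ∈ P, F.inf' hF (fun c => dist p c) :=
  sum_le_sum fun p _ => by
    rw [inf'_max_dist_sub_zero]
    have hd : 0 ≤ F.inf' hF (fun c => dist p c) := (le_inf'_iff hF _).2 fun _ _ => dist_nonneg
    exact max_le (by linarith) hd

theorem sum_inf'_dist_le_sum_inf'_max_dist_sub_zero_add (P F : Finset α) (hF : F.Nonempty)
    (r : ℝ) :
    ∑ p ∈ P, F.inf' hF (fun c => dist p c) ≤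
      ∑ p ∈ P, F.inf' hF (fun c => max (dist p c - r) 0) + P.card * r := by
  rw [← nsmul_eq_mul, ← sum_const, ← sum_add_distrib]
  exact sum_le_sum fun p _ => by
    rw [inf'_max_dist_sub_zero]
    linarith [le_max_left (F.inf' hF (fun c => dist p c) - r) 0]

end TruncatedDistance

theorem one_add_div_three_mul_add_le {ε x A : ℝ} (hε0 : 0 < ε) (hε1 : ε ≤ 1) (hx : 0 ≤ x)
    (hA : 2 * x / ε ≤ A) : (1 + ε / 3) * (A + x) ≤ (1 + ε) * A := by
  rw [div_le_iff₀ hε0] at hA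
  have hA0 : 0 ≤ A := by nlinarith
  nlinarith [mul_nonneg (mul_nonneg hε0.le (sub_nonneg.2 hε1)) hA0]

theorem approx_median_gives_approx_hybrid_general {d : ℕ} (ε r : ℝ)
    (hε0 : 0 < ε) (hε1 : ε < 1) (hr : 0 ≤ r) (k : ℕ)
    (P Fr F0 : Finset (EuclideanSpace ℝ (Fin d)))
    (hFr : Fr.Nonempty) (hF0 : F0.Nonempty)
    (hFrk : Fr.card ≤ k)
    (hF0opt : ∀ F' : Finset (EuclideanSpace ℝ (Fin d)), (h' : F'.Nonempty) →
      F'.card ≤ k →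
      ∑ p ∈ P, F0.inf' hF0 (fun c => dist p c) ≤
        ∑ p ∈ P, F'.inf' h' (fun c => dist p c))
    (hbig : 2 * P.card * r / ε ≤
      ∑ p ∈ P, Fr.inf' hFr (fun c => max (dist p c - r) 0))
    (F : Finset (EuclideanSpace ℝ (Fin d))) (hF : F.Nonempty)
    (happrox : ∑ p ∈ P, F.inf' hF (fun c => dist p c) ≤
      (1 + ε / 3) * ∑ p ∈ P, F0.inf' hF0 (fun c => dist p c)) :
    ∑ p ∈ P, F.inf' hF (fun c => max (dist p c - r) 0) ≤
      (1 + ε) * ∑ p ∈ P, Fr.inf' hFr (fun c => max (dist p c - r) 0) := by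
  have hfactor : 0 ≤ 1 + ε / 3 := by linarith
  calc ∑ p ∈ P, F.inf' hF (fun c => max (dist p c - r) 0)
      ≤ ∑ p ∈ P, F.inf' hF (fun c => dist p c) :=
        sum_inf'_max_dist_sub_zero_le_sum_inf'_dist P F hF hr
    _ ≤ (1 + ε / 3) * ∑ p ∈ P, F0.inf' hF0 (fun c => dist p c) := happrox
    _ ≤ (1 + ε / 3) * ∑ p ∈ P, Fr.inf' hFr (fun c => dist p c) :=
        mul_le_mul_of_nonneg_left (hF0opt Fr hFr hFrk) hfactor
    _ ≤ (1 + ε / 3) * (∑ p ∈ P, Fr.inf' hFr (fun c => max (dist p c - r) 0) + P.card * r) :=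
        mul_le_mul_of_nonneg_left (sum_inf'_dist_le_sum_inf'_max_dist_sub_zero_add P Fr hFr r)
          hfactor
    _ ≤ (1 + ε) * ∑ p ∈ P, Fr.inf' hFr (fun c => max (dist p c - r) 0) :=
        one_add_div_three_mul_add_le hε0 hε1.le (by positivity) (by rwa [mul_assoc] at hbig)

/-- Second part of Lemma 2.3: when `OPT_r ≥ 2nr/ε`, any `(1 + ε/3)`-approximate
k-median solution `F` of size at most `k` is a `(1 + ε)`-approximate hybrid
solution. -/
theorem approx_median_gives_approx_hybrid {d : ℕ} (ε r : ℝ)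
    (hε0 : 0 < ε) (hε1 : ε < 1) (hr : 0 ≤ r) (k : ℕ) (hk : 1 ≤ k)
    (P Fr F0 : Finset (EuclideanSpace ℝ (Fin d)))
    (hFr : Fr.Nonempty) (hF0 : F0.Nonempty)
    (hFrk : Fr.card ≤ k) (hF0k : F0.card ≤ k)
    (hFropt : ∀ F' : Finset (EuclideanSpace ℝ (Fin d)), (h' : F'.Nonempty) →
      F'.card ≤ k →
      ∑ p ∈ P, Fr.inf' hFr (fun c => max (dist p c - r) 0) ≤
        ∑ p ∈ P, F'.inf' h' (fun c => max (dist p c - r) 0))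
    (hF0opt : ∀ F' : Finset (EuclideanSpace ℝ (Fin d)), (h' : F'.Nonempty) →
      F'.card ≤ k →
      ∑ p ∈ P, F0.inf' hF0 (fun c => dist p c) ≤
        ∑ p ∈ P, F'.inf' h' (fun c => dist p c))
    (hbig : 2 * P.card * r / ε ≤
      ∑ p ∈ P, Fr.inf' hFr (fun c => max (dist p c - r) 0))
    (F : Finset (EuclideanSpace ℝ (Fin d))) (hF : F.Nonempty) (hFk : F.card ≤ k)
    (happrox : ∑ p ∈ P, F.inf' hF (fun c => dist p c) ≤
      (1 + ε / 3) * ∑ p ∈ P, F0.inf' hF0 (fun c => dist p c)) :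
    ∑ p ∈ P, F.inf' hF (fun c => max (dist p c - r) 0) ≤
      (1 + ε) * ∑ p ∈ P, Fr.inf' hFr (fun c => max (dist p c - r) 0) :=
  approx_median_gives_approx_hybrid_general ε r hε0 hε1 hr k P Fr F0 hFr hF0 hFrk hF0opt hbig F hF
    happrox
end

section
/- Let 0 < δ < 1/2 and r ≥ 0, let c, c' ∈ ℝ^d with t := dist(c, c') > 16r, and let D, N ⊂ ℝ^d be finite sets such that dist(p, c') ≥ t/4 for every p ∈ D, and |N| ≤ (δ²/4)·|D|. Then ∑_{p ∈ N} d_r(p, c') ≤ δ·∑_{p ∈ D} d_r(p, c') + (1 + δ)·∑_{p ∈ N} d_r(p, c). (Claim 2.7, the tiny-cluster reassignment bound: a small cluster N around a faraway center c can be reassigned to the already-chosen center c' at small extra cost.) -/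
/-! By the triangle inequality, moving a point of `N` from `c` to `c'` costs at most
`t = dist c c'` extra. The points of `D` lie at distance at least `t / 4` from `c'`, so each
contributes at least `t / 4 - r ≥ t / 8` to the cost of `D`, and `|N| ≤ (δ² / 4) |D|` then makes
the total extra cost `|N| t` at most `δ` times the cost of `D`. -/

open Finset

section TruncDist

variable {α : Type*} [PseudoMetricSpace α]

/-- The paper's `d_r(x, y)`. -/
def truncDist (r : ℝ) (x y : α) : ℝ := max (dist x y - r) 0

theorem truncDist_nonneg (r : ℝ) (x y : α) : 0 ≤ truncDist r x y := le_max_right _ _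

theorem dist_sub_le_truncDist (r : ℝ) (x y : α) : dist x y - r ≤ truncDist r x y :=
  le_max_left _ _

theorem truncDist_le_truncDist_add_dist (r : ℝ) (x y z : α) :
    truncDist r x z ≤ truncDist r x y + dist y z := by
  refine max_le ?_ (add_nonneg (truncDist_nonneg r x y) dist_nonneg)
  linarith [dist_triangle x y z, dist_sub_le_truncDist r x y]

theorem sum_truncDist_le_sum_truncDist_add_card_mul_dist (r : ℝ) (N : Finset α) (c c' : α) :
    ∑ p ∈ N, truncDist r p c' ≤ ∑ p ∈ N, truncDist r p c + N.card * dist c c' := by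
  calc ∑ p ∈ N, truncDist r p c' ≤ ∑ p ∈ N, (truncDist r p c + dist c c') :=
        sum_le_sum fun p _ => truncDist_le_truncDist_add_dist r p c c'
    _ = ∑ p ∈ N, truncDist r p c + N.card * dist c c' := by
        rw [sum_add_distrib, sum_const, nsmul_eq_mul]

theorem card_mul_sub_le_sum_truncDist {r a : ℝ} {D : Finset α} {c : α}
    (hD : ∀ p ∈ D, a ≤ dist p c) :
    D.card * (a - r) ≤ ∑ p ∈ D, truncDist r p c := by
  calc (D.card : ℝ) * (a - r) = ∑ _p ∈ D, (a - r) := by rw [sum_const, nsmul_eq_mul]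
    _ ≤ ∑ p ∈ D, truncDist r p c := sum_le_sum fun p hp =>
        (sub_le_sub_right (hD p hp) r).trans (dist_sub_le_truncDist r p c)

theorem card_mul_dist_le_mul_sum_truncDist {δ r : ℝ} (hδ : 0 ≤ δ) (hδ_lt : δ < 1 / 2)
    {c c' : α} (ht : 16 * r < dist c c') {D N : Finset α}
    (hD : ∀ p ∈ D, dist c c' / 4 ≤ dist p c')
    (hN : (N.card : ℝ) ≤ δ ^ 2 / 4 * D.card) :
    N.card * dist c c' ≤ δ * ∑ p ∈ D, truncDist r p c' := by
  set t := dist c c'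
  have hδt : δ * t / 4 ≤ t / 4 - r := by nlinarith [dist_nonneg (x := c) (y := c')]
  calc (N.card : ℝ) * t ≤ δ ^ 2 / 4 * D.card * t := by gcongr
    _ = δ * (D.card * (δ * t / 4)) := by ring
    _ ≤ δ * (D.card * (t / 4 - r)) := by gcongr
    _ ≤ δ * ∑ p ∈ D, truncDist r p c' :=
        mul_le_mul_of_nonneg_left (card_mul_sub_le_sum_truncDist hD) hδ

end TruncDist

theorem tiny_cluster_reassignment_general {d : ℕ} (δ r : ℝ)
    (hδ0 : 0 < δ) (hδ1 : δ < 1 / 2)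
    (c c' : EuclideanSpace ℝ (Fin d)) (ht : 16 * r < dist c c')
    (D N : Finset (EuclideanSpace ℝ (Fin d)))
    (hD : ∀ p ∈ D, dist c c' / 4 ≤ dist p c')
    (hN : (N.card : ℝ) ≤ δ ^ 2 / 4 * D.card) :
    ∑ p ∈ N, max (dist p c' - r) 0 ≤
      δ * (∑ p ∈ D, max (dist p c' - r) 0) +
        (1 + δ) * ∑ p ∈ N, max (dist p c - r) 0 := by
  have hNc : 0 ≤ ∑ p ∈ N, truncDist r p c := sum_nonneg fun p _ => truncDist_nonneg r p c
  calc ∑ p ∈ N, truncDist r p c'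
      ≤ ∑ p ∈ N, truncDist r p c + N.card * dist c c' :=
        sum_truncDist_le_sum_truncDist_add_card_mul_dist r N c c'
    _ ≤ ∑ p ∈ N, truncDist r p c + δ * ∑ p ∈ D, truncDist r p c' :=
        add_le_add_right (card_mul_dist_le_mul_sum_truncDist hδ0.le hδ1 ht hD hN) _
    _ ≤ δ * ∑ p ∈ D, truncDist r p c' + (1 + δ) * ∑ p ∈ N, truncDist r p c := by
        linarith [mul_nonneg hδ0.le hNc]

/-- Claim 2.7, the tiny-cluster reassignment bound: a small cluster `N` around
a faraway center `c` can be reassigned to the already-chosen center `c'` at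
small extra cost:
`∑_{p ∈ N} d_r(p, c') ≤ δ·∑_{p ∈ D} d_r(p, c') + (1 + δ)·∑_{p ∈ N} d_r(p, c)`. -/
theorem tiny_cluster_reassignment {d : ℕ} (δ r : ℝ)
    (hδ0 : 0 < δ) (hδ1 : δ < 1 / 2) (hr : 0 ≤ r)
    (c c' : EuclideanSpace ℝ (Fin d)) (ht : 16 * r < dist c c')
    (D N : Finset (EuclideanSpace ℝ (Fin d)))
    (hD : ∀ p ∈ D, dist c c' / 4 ≤ dist p c')
    (hN : (N.card : ℝ) ≤ δ ^ 2 / 4 * D.card) :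
    ∑ p ∈ N, max (dist p c' - r) 0 ≤
      δ * (∑ p ∈ D, max (dist p c' - r) 0) +
        (1 + δ) * ∑ p ∈ N, max (dist p c - r) 0 :=
  tiny_cluster_reassignment_general δ r hδ0 hδ1 c c' ht D N hD hN
end

section
/- Let 0 < δ < 1/2 and r ≥ 0, let L ⊂ ℝ^d be finite and c* ∈ ℝ^d, and set L_near := {p ∈ L : dist(p, c*) ≤ 8r/δ} and L_far := L ∖ L_near. If |L_near| ≤ (δ/8)·|L_far|, then ∑_{p ∈ L} d_r(p, c*) ≤ ∑_{p ∈ L} dist(p, c*) ≤ (1 + 3δ/4)·∑_{p ∈ L} d_r(p, c*). (Claim 2.10: when most points of the cluster L are far from its center, the hybrid cost and the 1-median cost of L with center c* agree up to a 1+3δ/4 factor.) -/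
/-! Write `n` for the number of far points and `S` for their total distance to the center.
The near points number at most `δ n / 8` and each lies within `8r/δ`, so they add at most `r n`
to the 1-median cost; and `S ≥ 8 r n / δ`, so replacing `dist` by `d_r` on the far points loses at
most `r n ≤ δ S / 8`. The factor `1 + 3δ/4` absorbs both losses as long as `3δ ≤ 16`. -/

open Finset

variable {α : Type*}

lemma sum_max_sub_le_sum {s : Finset α} {f : α → ℝ} {r : ℝ} (hr : 0 ≤ r)
    (hf : ∀ p ∈ s, 0 ≤ f p) :
    ∑ p ∈ s, max (f p - r) 0 ≤ ∑ p ∈ s, f p :=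
  sum_le_sum fun p hp => max_le (by linarith) (hf p hp)

lemma sum_sub_card_mul_le_sum_max_sub {s t : Finset α} (hts : t ⊆ s) (f : α → ℝ) (r : ℝ) :
    ∑ p ∈ t, f p - t.card * r ≤ ∑ p ∈ s, max (f p - r) 0 := calc
  ∑ p ∈ t, f p - t.card * r = ∑ p ∈ t, (f p - r) := by
    rw [sum_sub_distrib, sum_const, nsmul_eq_mul]
  _ ≤ ∑ p ∈ t, max (f p - r) 0 := sum_le_sum fun _ _ => le_max_left _ _
  _ ≤ ∑ p ∈ s, max (f p - r) 0 :=
    sum_le_sum_of_subset_of_nonneg hts fun _ _ _ => le_max_right _ _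

lemma sum_le_one_add_mul_sum_max_sub_of_card_near_le [DecidableEq α] {s : Finset α}
    {f : α → ℝ} {δ r : ℝ} (hδ0 : 0 < δ) (hδ : 3 * δ ≤ 16) (hr : 0 ≤ r)
    (hsize : ((s.filter (fun p => f p ≤ 8 * r / δ)).card : ℝ) ≤
      δ / 8 * (s \ s.filter (fun p => f p ≤ 8 * r / δ)).card) :
    ∑ p ∈ s, f p ≤ (1 + 3 * δ / 4) * ∑ p ∈ s, max (f p - r) 0 := by
  set t := 8 * r / δ with ht_def
  set near := s.filter (fun p => f p ≤ t)
  set far := s \ near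
  set n : ℝ := (far.card : ℝ)
  have ht : 0 ≤ t := by positivity
  have hδt : δ * t = 8 * r := by rw [ht_def]; field_simp
  clear_value t
  have hsum_near : ∑ p ∈ near, f p ≤ r * n := calc
    ∑ p ∈ near, f p ≤ near.card * t := by
      simpa using sum_le_card_nsmul near f t fun p hp => (mem_filter.mp hp).2
    _ ≤ δ / 8 * n * t := mul_le_mul_of_nonneg_right hsize ht
    _ = r * n := by linear_combination n / 8 * hδt
  have hsum_far : n * t ≤ ∑ p ∈ far, f p := by
    have hfar : ∀ p ∈ far, t ≤ f p := fun p hp => by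
      simp only [far, near, mem_sdiff, mem_filter, not_and, not_le] at hp
      exact (hp.2 hp.1).le
    simpa using card_nsmul_le_sum far f t hfar
  have hloss : 8 * (r * n) ≤ δ * ∑ p ∈ far, f p := by
    linear_combination mul_le_mul_of_nonneg_left hsum_far hδ0.le - n * hδt
  have hhybrid := sum_sub_card_mul_le_sum_max_sub (sdiff_subset : far ⊆ s) f r
  rw [← sum_sdiff (filter_subset (fun p => f p ≤ t) s)]
  have hrn : 0 ≤ r * n := mul_nonneg hr (Nat.cast_nonneg _)
  calc ∑ p ∈ far, f p + ∑ p ∈ near, f p ≤ ∑ p ∈ far, f p + r * n := by linarith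
    _ ≤ (1 + 3 * δ / 4) * (∑ p ∈ far, f p - n * r) := by
      nlinarith [mul_nonneg (sub_nonneg.mpr hδ) hrn]
    _ ≤ (1 + 3 * δ / 4) * ∑ p ∈ s, max (f p - r) 0 :=
      mul_le_mul_of_nonneg_left hhybrid (by positivity)

open Classical in
/-- Claim 2.10: when most points of the cluster `L` are far from its center
`c*`, the hybrid cost and the 1-median cost of `L` with center `c*` agree up
to a `1 + 3δ/4` factor. -/
theorem hybrid_vs_median_cluster {d : ℕ} (δ r : ℝ)
    (hδ0 : 0 < δ) (hδ1 : δ < 1 / 2) (hr : 0 ≤ r)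
    (L : Finset (EuclideanSpace ℝ (Fin d))) (cs : EuclideanSpace ℝ (Fin d))
    (hsize : ((L.filter (fun p => dist p cs ≤ 8 * r / δ)).card : ℝ) ≤
      δ / 8 * (L \ L.filter (fun p => dist p cs ≤ 8 * r / δ)).card) :
    (∑ p ∈ L, max (dist p cs - r) 0 ≤ ∑ p ∈ L, dist p cs) ∧
    (∑ p ∈ L, dist p cs ≤ (1 + 3 * δ / 4) * ∑ p ∈ L, max (dist p cs - r) 0) :=
  ⟨sum_max_sub_le_sum hr fun _ _ => dist_nonneg,
    sum_le_one_add_mul_sum_max_sub_of_card_near_le hδ0 (by linarith) hr hsize⟩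
end

section
/- Let 0 < δ < 1/2 and r ≥ 0, let L ⊂ ℝ^d be finite and c* ∈ ℝ^d, and set L_near := {p ∈ L : dist(p, c*) ≤ 8r/δ} and L_far := L ∖ L_near; assume |L_near| ≤ (δ/8)·|L_far|. Let c̃* ∈ ℝ^d be an optimal 1-median of L, i.e., ∑_{p ∈ L} dist(p, c̃*) ≤ ∑_{p ∈ L} dist(p, x) for every x ∈ ℝ^d, and let c₁ ∈ ℝ^d satisfy ∑_{p ∈ L} dist(p, c₁) ≤ (1 + δ/8)·∑_{p ∈ L} dist(p, c̃*). Then ∑_{p ∈ L} d_r(p, c₁) ≤ (1 + δ)·∑_{p ∈ L} d_r(p, c*). (Claim 2.11: a (1+δ/8)-approximate 1-median of L is a (1+δ)-approximate Hybrid 1-Median of L.) -/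
/-!
Bounding the hybrid cost by the plain cost, `c₁` costs at most `(1 + δ/8)` times the plain
cost of `c*`, which exceeds the hybrid cost `S` of `c*` by at most `|L| r`. Every far point
pays more than `8r/δ - r` in `S`, and far points are almost all of `L`, so `|L| r` is a small
multiple of `δ S`, which fits into the slack between `1 + δ/8` and `1 + δ`.
-/

open Finset

section HybridCost

variable {α : Type*} [PseudoMetricSpace α]

theorem sum_max_dist_sub_le_sum_dist (L : Finset α) (c : α) {r : ℝ} (hr : 0 ≤ r) :
    ∑ p ∈ L, max (dist p c - r) 0 ≤ ∑ p ∈ L, dist p c :=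
  sum_le_sum fun p _ => max_le (by linarith) dist_nonneg

theorem sum_dist_le_sum_max_dist_sub_add (L : Finset α) (c : α) (r : ℝ) :
    ∑ p ∈ L, dist p c ≤ ∑ p ∈ L, max (dist p c - r) 0 + L.card * r := by
  rw [← nsmul_eq_mul, ← sum_const, ← sum_add_distrib]
  exact sum_le_sum fun p _ => by linarith [le_max_left (dist p c - r) 0]

theorem card_far_mul_le_sum_max_dist_sub [DecidableEq α] (L : Finset α) (c : α) (R r : ℝ)
    [DecidablePred fun p => dist p c ≤ R] :
    ((L \ L.filter fun p => dist p c ≤ R).card : ℝ) * (R - r) ≤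
      ∑ p ∈ L, max (dist p c - r) 0 := by
  rw [← nsmul_eq_mul, ← sum_const]
  calc ∑ _ ∈ L \ L.filter (fun p => dist p c ≤ R), (R - r)
      ≤ ∑ p ∈ L \ L.filter (fun p => dist p c ≤ R), max (dist p c - r) 0 := by
        refine sum_le_sum fun p hp => ?_
        have hfar : R < dist p c := by simp_all
        linarith [le_max_left (dist p c - r) 0]
    _ ≤ ∑ p ∈ L, max (dist p c - r) 0 :=
        sum_le_sum_of_subset_of_nonneg sdiff_subset fun _ _ _ => le_max_right _ _

end HybridCost

theorem Finset.card_le_one_add_mul_card_sdiff_filter {β : Type*} [DecidableEq β]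
    (L : Finset β) (P : β → Prop) [DecidablePred P] {ε : ℝ}
    (h : ((L.filter P).card : ℝ) ≤ ε * (L \ L.filter P).card) :
    (L.card : ℝ) ≤ (1 + ε) * (L \ L.filter P).card := by
  have hsplit := card_sdiff_add_card_eq_card (filter_subset P L)
  rw [← hsplit, Nat.cast_add]
  linarith

open Classical in
/-- Claim 2.11: if most points of `L` are far from `c*`, then a
`(1 + δ/8)`-approximate 1-median `c₁` of `L` is a `(1 + δ)`-approximate
Hybrid 1-Median of `L`. -/
theorem approx_median_is_approx_hybrid_median {d : ℕ} (δ r : ℝ)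
    (hδ0 : 0 < δ) (hδ1 : δ < 1 / 2) (hr : 0 ≤ r)
    (L : Finset (EuclideanSpace ℝ (Fin d))) (cs : EuclideanSpace ℝ (Fin d))
    (hsize : ((L.filter (fun p => dist p cs ≤ 8 * r / δ)).card : ℝ) ≤
      δ / 8 * (L \ L.filter (fun p => dist p cs ≤ 8 * r / δ)).card)
    (cts : EuclideanSpace ℝ (Fin d))
    (hopt : ∀ x : EuclideanSpace ℝ (Fin d),
      ∑ p ∈ L, dist p cts ≤ ∑ p ∈ L, dist p x)
    (c₁ : EuclideanSpace ℝ (Fin d))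
    (happrox : ∑ p ∈ L, dist p c₁ ≤ (1 + δ / 8) * ∑ p ∈ L, dist p cts) :
    ∑ p ∈ L, max (dist p c₁ - r) 0 ≤
      (1 + δ) * ∑ p ∈ L, max (dist p cs - r) 0 := by
  set S := ∑ p ∈ L, max (dist p cs - r) 0
  set m : ℝ := ((L \ L.filter fun p => dist p cs ≤ 8 * r / δ).card : ℝ)
  have hfar : (8 - δ) * (m * r) ≤ δ * S :=
    calc (8 - δ) * (m * r) = δ * (m * (8 * r / δ - r)) := by field_simp
      _ ≤ δ * S := mul_le_mul_of_nonneg_left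
          (card_far_mul_le_sum_max_dist_sub L cs (8 * r / δ) r) hδ0.le
  have hcard : L.card * r ≤ (1 + δ / 8) * (m * r) := by
    rw [← mul_assoc]
    exact mul_le_mul_of_nonneg_right (L.card_le_one_add_mul_card_sdiff_filter _ hsize) hr
  calc ∑ p ∈ L, max (dist p c₁ - r) 0
      ≤ ∑ p ∈ L, dist p c₁ := sum_max_dist_sub_le_sum_dist L c₁ hr
    _ ≤ (1 + δ / 8) * ∑ p ∈ L, dist p cts := happrox
    _ ≤ (1 + δ / 8) * ∑ p ∈ L, dist p cs := mul_le_mul_of_nonneg_left (hopt cs) (by positivity)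
    _ ≤ (1 + δ / 8) * (S + L.card * r) := by
        gcongr; exact sum_dist_le_sum_max_dist_sub_add L cs r
    _ ≤ (1 + δ) * S := by
        -- `(1 + δ/8)² · m r ≤ (1 + δ/8)² · δ S / (8 - δ) ≤ 7δ/8 · S` as `δ < 1/2`
        have hmr : 0 ≤ m * r := mul_nonneg (Nat.cast_nonneg _) hr
        nlinarith [mul_le_mul_of_nonneg_left hcard (by positivity : (0 : ℝ) ≤ 1 + δ / 8),
          mul_le_mul_of_nonneg_left hmr hδ0.le]
end
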